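/- arXiv:1503.05800 — 7 statements merged into one kernel-verified Lean document; each statement's English description precedes it below -/
import Mathlib

section
/- For every generator g : ZMod N → ℂ, every N×N complex matrix H with rows and columns indexed by ZMod N, and every λ = (q,j) ∈ (ZMod N)², one has N·⟨g_λ, H g_λ⟩ = ∑_{(p,ℓ) ∈ (ZMod N)²} ω^{−j·p} · ω^{ℓ·q} · ℋ̂_p(ℓ) · ⟨g, Π_{(p,ℓ)} g⟩, where ℋ̂_p is the discrete Fourier transform of the p-th band ℋ_p of H. -/
open Complex Finset

/-- `gw N m = ω^m` where `ω = exp(2πi/N)` and `m : ZMod N`. -/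
noncomputable def gw (N : ℕ) (m : ZMod N) : ℂ :=
  Complex.exp (2 * Real.pi * Complex.I * (m.val : ℂ) / (N : ℂ))

/-- Translation operator `(T_p x)(n) = x(n-p)`. -/
def Tr (N : ℕ) (p : ZMod N) (x : ZMod N → ℂ) : ZMod N → ℂ :=
  fun n => x (n - p)

/-- Modulation operator `(M_ℓ x)(n) = ω^{ℓ·n} x(n)`. -/
noncomputable def Md (N : ℕ) (l : ZMod N) (x : ZMod N → ℂ) : ZMod N → ℂ :=
  fun n => gw N (l * n) * x n

/-- Time-frequency shift `Π_{(p,ℓ)} = M_ℓ ∘ T_p`. -/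
noncomputable def Pig (N : ℕ) (p l : ZMod N) (x : ZMod N → ℂ) : ZMod N → ℂ :=
  Md N l (Tr N p x)

/-- Inner product, conjugate linear in the first argument. -/
noncomputable def inn (N : ℕ) [NeZero N] (x y : ZMod N → ℂ) : ℂ :=
  ∑ j : ZMod N, (starRingEnd ℂ) (x j) * y j

/-- The `p`-th band of a matrix `H`, `ℋ_p(i) = H i (i-p)`. -/
def band (N : ℕ) (H : Matrix (ZMod N) (ZMod N) ℂ) (p : ZMod N) : ZMod N → ℂ :=
  fun i => H i (i - p)

/-- The discrete Fourier transform `x̂(j) = ∑_n x(n) ω^{-nj}`. -/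
noncomputable def dft (N : ℕ) [NeZero N] (x : ZMod N → ℂ) : ZMod N → ℂ :=
  fun j => ∑ n : ZMod N, x n * gw N (-(n * j))

/-!
`ω^·` is Mathlib's standard additive character `ZMod.stdAddChar`, so it is multiplicative, its
conjugate is its inverse, and `∑_ℓ ω^{ℓt} = N·[t = 0]`. Substituting `k = n - p` in `H g_λ` writes
`⟨g_λ, H g_λ⟩` as `∑_p ω^{-jp} ∑_n ℋ_p(n) · conj g(n-q) g(n-q-p)`, while `⟨g, Π_{(p,ℓ)} g⟩` is the
DFT of `m ↦ conj g(m) g(m-p)` at `-ℓ`. For each `p` the two sides then agree by the shifted Parseval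
identity `∑_ℓ ω^{ℓq} x̂(ℓ) ŷ(-ℓ) = N ∑_n x(n) y(n-q)`, a direct consequence of orthogonality.
-/

section
variable {N : ℕ} [NeZero N]

lemma gw_eq_stdAddChar : gw N = ZMod.stdAddChar := by
  funext m
  rw [ZMod.stdAddChar_apply, ZMod.toCircle_apply, gw]

lemma gw_add (a b : ZMod N) : gw N (a + b) = gw N a * gw N b := by
  rw [gw_eq_stdAddChar]
  exact AddChar.map_add_eq_mul _ _ _

lemma conj_gw (m : ZMod N) : starRingEnd ℂ (gw N m) = gw N (-m) := by
  rw [gw_eq_stdAddChar, AddChar.map_neg_eq_inv, ZMod.stdAddChar_apply, ← Circle.coe_inv,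
    Circle.coe_inv_eq_conj]

lemma sum_gw_mul_eq_ite (t : ZMod N) :
    ∑ l : ZMod N, gw N (l * t) = if t = 0 then (N : ℂ) else 0 := by
  rw [gw_eq_stdAddChar]
  simpa using AddChar.sum_mulShift t (ZMod.isPrimitive_stdAddChar N)

lemma inn_Pig_self_eq_dft (x : ZMod N → ℂ) (p l : ZMod N) :
    inn N x (Pig N p l x) = dft N (fun m => starRingEnd ℂ (x m) * x (m - p)) (-l) := by
  refine sum_congr rfl fun m _ => ?_
  rw [Pig, Md, Tr, show -(m * -l) = l * m by ring]
  ring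

lemma sum_gw_mul_dft_mul_dft_neg (x y : ZMod N → ℂ) (q : ZMod N) :
    ∑ l : ZMod N, gw N (l * q) * dft N x l * dft N y (-l) = N * ∑ n : ZMod N, x n * y (n - q) := by
  calc ∑ l : ZMod N, gw N (l * q) * dft N x l * dft N y (-l)
      = ∑ l : ZMod N, ∑ m : ZMod N, ∑ n : ZMod N, x n * y m * gw N (l * (q - n + m)) := by
        simp only [dft, mul_sum, sum_mul]
        refine sum_congr rfl fun l _ => sum_congr rfl fun m _ => sum_congr rfl fun n _ => ?_
        rw [show l * (q - n + m) = l * q + -(n * l) + -(m * -l) by ring, gw_add, gw_add]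
        ring
    _ = ∑ m : ZMod N, ∑ n : ZMod N, x n * y m * if q - n + m = 0 then (N : ℂ) else 0 := by
        rw [sum_comm]
        refine sum_congr rfl fun m _ => ?_
        rw [sum_comm]
        simp only [← sum_gw_mul_eq_ite, mul_sum]
    _ = N * ∑ n : ZMod N, x n * y (n - q) := by
        rw [sum_comm]
        simp only [mul_sum, show ∀ n m : ZMod N, q - n + m = 0 ↔ m = n - q from
          fun n m => by constructor <;> intro h <;> linear_combination h, mul_ite, mul_zero,
          sum_ite_eq', mem_univ, if_true]
        exact sum_congr rfl fun n _ => by ring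

lemma inn_Pig_mulVec_Pig_eq_sum_band (x : ZMod N → ℂ) (H : Matrix (ZMod N) (ZMod N) ℂ)
    (q j : ZMod N) :
    inn N (Pig N q j x) (H.mulVec (Pig N q j x)) =
      ∑ p : ZMod N, gw N (-(j * p)) *
        ∑ n : ZMod N, band N H p n * (starRingEnd ℂ (x (n - q)) * x (n - q - p)) := by
  calc inn N (Pig N q j x) (H.mulVec (Pig N q j x))
      = ∑ n : ZMod N, ∑ p : ZMod N, starRingEnd ℂ (gw N (j * n) * x (n - q)) *
          (H n (n - p) * (gw N (j * (n - p)) * x (n - p - q))) := by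
        refine sum_congr rfl fun n _ => ?_
        simp only [Matrix.mulVec, dotProduct, mul_sum]
        exact (Fintype.sum_equiv (Equiv.subLeft n) _ _ fun p => rfl).symm
    _ = _ := by
        rw [sum_comm]
        simp only [mul_sum]
        refine sum_congr rfl fun p _ => sum_congr rfl fun n _ => ?_
        rw [map_mul, conj_gw, band, show n - p - q = n - q - p by ring,
          show -(j * p) = -(j * n) + j * (n - p) by ring, gw_add]
        ring

end

/-- `N ⟨g_λ, H g_λ⟩ = ∑_{p,ℓ} ω^{-jp} ω^{ℓq} ℋ̂_p(ℓ) ⟨g, Π_{(p,ℓ)} g⟩` for `λ = (q,j)`. -/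
theorem Gabor_PhaseLift_is_FFT (N : ℕ) [NeZero N] (g : ZMod N → ℂ)
    (H : Matrix (ZMod N) (ZMod N) ℂ) (q j : ZMod N) :
    (N : ℂ) * inn N (Pig N q j g) (H.mulVec (Pig N q j g)) =
      ∑ p : ZMod N, ∑ l : ZMod N,
        gw N (-(j * p)) * gw N (l * q) * dft N (band N H p) l * inn N g (Pig N p l g) := by
  rw [inn_Pig_mulVec_Pig_eq_sum_band, mul_sum]
  refine sum_congr rfl fun p _ => ?_
  rw [mul_left_comm, ← sum_gw_mul_dft_mul_dft_neg (band N H p)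
    (fun m => starRingEnd ℂ (g m) * g (m - p)), mul_sum]
  refine sum_congr rfl fun l _ => ?_
  rw [inn_Pig_self_eq_dft]
  ring
end

section
/- Let g : ZMod N → ℂ be a generator such that ⟨g, Π_λ g⟩ ≠ 0 for every λ ∈ (ZMod N)². Then the Gabor system (g_λ)_{λ ∈ (ZMod N)²} allows phase retrieval: for all x, y : ZMod N → ℂ, if |⟨x, g_λ⟩| = |⟨y, g_λ⟩| for every λ ∈ (ZMod N)², then there exists c ∈ ℂ with |c| = 1 and x = c • y. -/
open Complex Finset

/-!
Fourier transforming the spectrogram `|⟨x, Π_{(p,l)} g⟩|²` first in `l` (Wiener–Khinchin) and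
then in `p` turns it into the product of the Fourier transform of the lag product
`n ↦ conj (x n) * x (n + q)` with the ambiguity function `⟨g, Π_λ g⟩` of the window. As the
latter never vanishes, the spectrogram determines every product `conj (x a) * x b`, that is the
rank-one matrix `x xᴴ`, and this determines `x` up to a unimodular factor.
-/

open ComplexConjugate ZMod

namespace ZMod

variable {N : ℕ} [NeZero N]

lemma conj_stdAddChar (a : ZMod N) : conj (stdAddChar a) = stdAddChar (-a) := by
  rw [stdAddChar_apply, stdAddChar_apply, AddChar.map_neg_eq_inv, Circle.coe_inv_eq_conj]

lemma conj_dft (Φ : ZMod N → ℂ) (k : ZMod N) : conj (𝓕 Φ k) = 𝓕 (star Φ) (-k) := by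
  simp only [dft_apply, smul_eq_mul, map_sum, map_mul, conj_stdAddChar, mul_neg, neg_neg,
    Pi.star_apply, RCLike.star_def]

lemma dft_sum_mul_sub (F H : ZMod N → ℂ) (k : ZMod N) :
    𝓕 (fun p ↦ ∑ n, F n * H (n - p)) k = 𝓕 F k * 𝓕 H (-k) := by
  rw [dft_apply, dft_apply, dft_apply, Finset.sum_mul_sum]
  simp only [smul_eq_mul, Finset.mul_sum]
  rw [Finset.sum_comm]
  refine Finset.sum_congr rfl fun n _ ↦ Fintype.sum_equiv (Equiv.subLeft n) _ _ fun p ↦ ?_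
  have hψ : (stdAddChar (-(p * k)) : ℂ)
      = stdAddChar (-(n * k)) * stdAddChar (-((n - p) * -k)) := by
    rw [← AddChar.map_add_eq_mul]
    ring_nf
  simp only [Equiv.subLeft_apply, hψ]
  ring

/-- Wiener–Khinchin. -/
lemma dft_sq_norm_dft (φ : ZMod N → ℂ) (q : ZMod N) :
    𝓕 (fun k ↦ (‖𝓕 φ k‖ : ℂ) ^ 2) q = N * ∑ n, φ n * conj (φ (n + q)) := by
  have hcorr : (fun k ↦ (‖𝓕 φ k‖ : ℂ) ^ 2) = 𝓕 (fun p ↦ ∑ n, φ n * conj (φ (n - p))) := by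
    ext k
    refine Eq.trans ?_ (dft_sum_mul_sub φ (star φ) k).symm
    rw [← conj_dft, Complex.mul_conj']
  rw [hcorr, dft_dft]
  simp

end ZMod

lemma eq_smul_of_conj_mul_eq {ι : Type*} {x y : ι → ℂ}
    (h : ∀ a b, conj (x a) * x b = conj (y a) * y b) : ∃ c : ℂ, ‖c‖ = 1 ∧ x = c • y := by
  have hnorm (a : ι) : ‖x a‖ = ‖y a‖ := by
    have hsq := h a a
    rw [Complex.conj_mul', Complex.conj_mul'] at hsq
    norm_cast at hsq
    exact (sq_eq_sq₀ (norm_nonneg _) (norm_nonneg _)).mp hsq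
  by_cases hy : y = 0
  · refine ⟨1, norm_one, funext fun a ↦ ?_⟩
    simpa [hy] using hnorm a
  obtain ⟨b, hb⟩ := Function.ne_iff.mp hy
  have hxb : x b ≠ 0 := norm_ne_zero_iff.mp (hnorm b ▸ norm_ne_zero_iff.mpr hb)
  refine ⟨x b / y b, by rw [norm_div, hnorm b, div_self (norm_ne_zero_iff.mpr hb)],
    funext fun a ↦ ?_⟩
  rw [Pi.smul_apply, smul_eq_mul, div_mul_eq_mul_div, eq_div_iff hb]
  apply mul_right_cancel₀ ((map_ne_zero conj).mpr hxb)
  linear_combination y b * h b a - y a * h b b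

section Gabor

variable (N : ℕ) [NeZero N]

lemma gw_eq_stdAddChar_s3 (m : ZMod N) : gw N m = stdAddChar m := by
  conv_rhs => rw [← ZMod.natCast_zmod_val m, ← Int.cast_natCast, stdAddChar_coe]
  rfl

lemma inn_Pig_eq_dft (x g : ZMod N → ℂ) (p l : ZMod N) :
    inn N x (Pig N p l g) = 𝓕 (fun j ↦ conj (x j) * g (j - p)) (-l) := by
  simp only [inn, Pig, Md, Tr, dft_apply, smul_eq_mul, gw_eq_stdAddChar_s3, mul_neg, neg_neg]
  exact Finset.sum_congr rfl fun j _ ↦ by rw [mul_comm j l]; ring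

lemma dft_sq_norm_inn_Pig (x g : ZMod N → ℂ) (p q : ZMod N) :
    𝓕 (fun l ↦ (‖inn N x (Pig N p (-l) g)‖ : ℂ) ^ 2) q
      = N * ∑ n, conj (x n) * x (n + q) * (g (n - p) * conj (g (n - p + q))) := by
  simp only [inn_Pig_eq_dft, neg_neg, dft_sq_norm_dft, map_mul, Complex.conj_conj]
  congr 1
  refine Finset.sum_congr rfl fun n _ ↦ ?_
  rw [add_sub_right_comm]
  ring

lemma dft_lag_neg_eq_conj_inn_Pig (g : ZMod N → ℂ) (q k : ZMod N) :
    𝓕 (fun m ↦ g m * conj (g (m + q))) (-k) = conj (inn N g (Pig N (-q) (-k) g)) := by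
  rw [inn_Pig_eq_dft, conj_dft, neg_neg]
  refine congrArg (fun Φ ↦ 𝓕 Φ (-k)) (funext fun m ↦ ?_)
  simp [mul_comm]

lemma dft_dft_sq_norm_inn_Pig (x g : ZMod N → ℂ) (q k : ZMod N) :
    𝓕 (fun p ↦ 𝓕 (fun l ↦ (‖inn N x (Pig N p (-l) g)‖ : ℂ) ^ 2) q) k
      = N * (𝓕 (fun n ↦ conj (x n) * x (n + q)) k * conj (inn N g (Pig N (-q) (-k) g))) := by
  simp only [dft_sq_norm_inn_Pig, dft_const_mul]
  rw [← dft_lag_neg_eq_conj_inn_Pig, ← dft_sum_mul_sub]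

end Gabor

/-- If `⟨g, Π_λ g⟩ ≠ 0` for all `λ`, the full Gabor system allows phase retrieval. -/
theorem Gabor_phase_retrieval (N : ℕ) [NeZero N] (g : ZMod N → ℂ)
    (hg : ∀ p l : ZMod N, inn N g (Pig N p l g) ≠ 0) :
    ∀ x y : ZMod N → ℂ,
      (∀ p l : ZMod N,
        ‖inn N x (Pig N p l g)‖ = ‖inn N y (Pig N p l g)‖) →
      ∃ c : ℂ, ‖c‖ = 1 ∧ x = c • y := by
  intro x y hxy
  have hlag (q : ZMod N) :
      (fun n ↦ conj (x n) * x (n + q)) = fun n ↦ conj (y n) * y (n + q) := by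
    refine dft.injective (funext fun k ↦ ?_)
    have h := dft_dft_sq_norm_inn_Pig N x g q k
    simp only [hxy, dft_dft_sq_norm_inn_Pig] at h
    exact mul_right_cancel₀ ((map_ne_zero _).mpr (hg _ _)) (mul_left_cancel₀ (NeZero.ne _) h.symm)
  exact eq_smul_of_conj_mul_eq fun a b ↦ by simpa using congrFun (hlag (b - a)) a
end

section
/- The set {g : ZMod N → ℂ | ∃ λ ∈ (ZMod N)², ⟨g, Π_λ g⟩ = 0} is a null set with respect to the product Lebesgue measure (volume) on the space of functions ZMod N → ℂ. Consequently, a standard complex Gaussian random vector g ∈ ℂ^N satisfies ⟨g, Π_λ g⟩ ≠ 0 for every λ ∈ (ZMod N)² with probability 1. -/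
open Complex Finset

/-!
Fix `λ = (p, ℓ)` and move `g` only in its coordinate `0`, `g 0 = z`. Then `⟨g, Π_λ g⟩` becomes
`w₀ |z|² + c` if `p = 0`, and `a z + w₀ g(-p) z̄ + c` if `p ≠ 0` (from the terms `j = p` and
`j = 0`), where `w₀ = ω^0 ≠ 0`. The zero set of the former is a circle; that of the latter, once
`g(-p) ≠ 0`, is the level set of a nonzero real-linear map `ℂ → ℂ`. Both are Lebesgue null, so by
Fubini each set `{g | ⟨g, Π_λ g⟩ = 0}` is null, and so is their finite union over `λ`.
-/

open MeasureTheory Function ComplexConjugate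

theorem MeasureTheory.Measure.pi_eq_zero_of_forall_update_null {ι : Type*} [Fintype ι]
    [DecidableEq ι] {X : ι → Type*} [∀ i, MeasurableSpace (X i)] {μ : ∀ i, Measure (X i)}
    [∀ i, SigmaFinite (μ i)] {S : Set (∀ i, X i)} (hS : MeasurableSet S) (i : ι)
    (h : ∀ x, μ i {y | update x i y ∈ S} = 0) : Measure.pi μ S = 0 := by
  have hslice : ∫⋯∫⁻_{i}, S.indicator 1 ∂μ = ∫⋯∫⁻_{i}, 0 ∂μ := by
    ext x
    simp only [lmarginal_singleton, Pi.zero_apply, lintegral_zero]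
    rw [← h x]
    exact lintegral_indicator_one (measurable_update x hS)
  simpa [lintegral_indicator_one hS] using
    lintegral_eq_of_lmarginal_eq {i} (measurable_one.indicator hS) measurable_const hslice

theorem Complex.volume_setOf_normSq_eq (c : ℂ) : volume {z : ℂ | (normSq z : ℂ) = c} = 0 := by
  refine measure_mono_null (fun z hz => ?_) (Measure.addHaar_sphere volume (0 : ℂ) √c.re)
  rw [mem_sphere_zero_iff_norm, Complex.norm_def, ← (hz : (normSq z : ℂ) = c), ofReal_re]

theorem LinearMap.addHaar_preimage_singleton {E F : Type*} [NormedAddCommGroup E]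
    [NormedSpace ℝ E] [MeasurableSpace E] [BorelSpace E] [FiniteDimensional ℝ E]
    (μ : Measure E) [μ.IsAddHaarMeasure] [AddCommGroup F] [Module ℝ F] {φ : E →ₗ[ℝ] F}
    (hφ : φ ≠ 0) (w : F) : μ (φ ⁻¹' {w}) = 0 := by
  obtain h | ⟨z₀, hz₀⟩ := (φ ⁻¹' {w}).eq_empty_or_nonempty
  · simp [h]
  have htranslate : φ ⁻¹' {w} = (· + -z₀) ⁻¹' (ker φ : Set E) := by
    ext z
    simp_all [sub_eq_zero, ← sub_eq_add_neg]
  rw [htranslate, measure_preimage_add_right]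
  exact Measure.addHaar_submodule μ _ (mt ker_eq_top.mp hφ)

theorem Complex.volume_setOf_mul_add_mul_conj_eq {a b : ℂ} (hab : a ≠ 0 ∨ b ≠ 0) (c : ℂ) :
    volume {z : ℂ | a * z + b * conj z = c} = 0 := by
  let φ : ℂ →ₗ[ℝ] ℂ := a • LinearMap.id + b • conjAe.toLinearMap
  have hφ : φ ≠ 0 := by
    intro h
    have h1 : a + b = 0 := by simpa [φ] using LinearMap.congr_fun h 1
    have hI : a * I - b * I = 0 := by simpa [φ, sub_eq_add_neg] using LinearMap.congr_fun h I
    have ha : a = 0 := by linear_combination (-I / 2) * (hI + I * h1) + a * I_mul_I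
    have hb : b = 0 := by linear_combination h1 - ha
    exact hab.elim (· ha) (· hb)
  exact LinearMap.addHaar_preimage_singleton volume hφ c

section WeightedAutocorrelation

variable {G : Type*} [AddGroup G] [Fintype G]

noncomputable def weightedAutocorr (w : G → ℂ) (p : G) (g : G → ℂ) : ℂ :=
  ∑ j, conj (g j) * (w j * g (j - p))

theorem measurable_weightedAutocorr (w : G → ℂ) (p : G) :
    Measurable (weightedAutocorr w p) := by
  unfold weightedAutocorr
  fun_prop

variable [DecidableEq G]

theorem weightedAutocorr_zero_update_zero (w : G → ℂ) (g : G → ℂ) (z : ℂ) :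
    weightedAutocorr w 0 (update g 0 z)
      = w 0 * normSq z + ∑ j ∈ univ.erase 0, conj (g j) * (w j * g j) := by
  rw [weightedAutocorr, ← add_sum_erase _ _ (mem_univ 0)]
  simp only [sub_zero, update_self]
  congr 1
  · rw [normSq_eq_conj_mul_self]
    ring
  · exact sum_congr rfl fun j hj => by rw [update_of_ne (ne_of_mem_erase hj)]

theorem weightedAutocorr_update_zero {p : G} (hp : p ≠ 0) (w : G → ℂ) (g : G → ℂ) (z : ℂ) :
    weightedAutocorr w p (update g 0 z)
      = conj (g p) * w p * z + w 0 * g (-p) * conj z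
        + ∑ j ∈ (univ.erase 0).erase p, conj (g j) * (w j * g (j - p)) := by
  rw [weightedAutocorr, ← add_sum_erase _ _ (mem_univ 0),
    ← add_sum_erase _ _ (mem_erase.mpr ⟨hp, mem_univ p⟩)]
  rw [update_self, zero_sub, update_of_ne (neg_ne_zero.mpr hp), update_of_ne hp, sub_self,
    update_self]
  rw [sum_congr rfl fun j hj => by
    rw [update_of_ne (ne_of_mem_erase (mem_of_mem_erase hj)),
      update_of_ne (sub_ne_zero.mpr (ne_of_mem_erase hj))]]
  ring

theorem volume_setOf_weightedAutocorr_zero_eq_zero {w : G → ℂ} (hw : w 0 ≠ 0) :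
    volume {g : G → ℂ | weightedAutocorr w 0 g = 0} = 0 := by
  rw [volume_pi]
  refine Measure.pi_eq_zero_of_forall_update_null
    (measurable_weightedAutocorr w 0 (measurableSet_singleton 0)) 0 fun g => ?_
  refine measure_mono_null (fun z hz => ?_)
    (volume_setOf_normSq_eq (-(∑ j ∈ univ.erase 0, conj (g j) * (w j * g j)) / w 0))
  replace hz : weightedAutocorr w 0 (update g 0 z) = 0 := hz
  rw [weightedAutocorr_zero_update_zero] at hz
  rw [Set.mem_ofPred_eq, eq_div_iff hw]
  linear_combination hz

theorem volume_setOf_weightedAutocorr_eq_zero_of_ne {w : G → ℂ} (hw : w 0 ≠ 0) {p : G}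
    (hp : p ≠ 0) : volume {g : G → ℂ | weightedAutocorr w p g = 0} = 0 := by
  set S := {g : G → ℂ | weightedAutocorr w p g = 0}
  have hsplit : S ⊆ {g | g (-p) = 0} ∪ (S ∩ {g | g (-p) ≠ 0}) := fun g hg =>
    (em (g (-p) = 0)).imp id (⟨hg, ·⟩)
  refine measure_mono_null hsplit (measure_union_null ?_ ?_) <;> rw [volume_pi]
  · exact Measure.pi_eval_preimage_null _ (measure_singleton 0)
  have hmeas : MeasurableSet (S ∩ {g | g (-p) ≠ 0}) :=
    (measurable_weightedAutocorr w p (measurableSet_singleton 0)).inter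
      (measurable_pi_apply (-p) (measurableSet_singleton 0).compl)
  refine Measure.pi_eq_zero_of_forall_update_null hmeas 0 fun g => ?_
  by_cases hg : g (-p) = 0
  · refine measure_mono_null (fun z hz => ?_) measure_empty
    exact hz.2 (by rwa [update_of_ne (neg_ne_zero.mpr hp)])
  refine measure_mono_null (fun z hz => ?_)
    (volume_setOf_mul_add_mul_conj_eq (a := conj (g p) * w p) (Or.inr (mul_ne_zero hw hg))
      (-∑ j ∈ (univ.erase 0).erase p, conj (g j) * (w j * g (j - p))))
  replace hz : weightedAutocorr w p (update g 0 z) = 0 := hz.1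
  rw [weightedAutocorr_update_zero hp] at hz
  exact eq_neg_of_add_eq_zero_left hz

theorem volume_setOf_weightedAutocorr_eq_zero {w : G → ℂ} (hw : w 0 ≠ 0) (p : G) :
    volume {g : G → ℂ | weightedAutocorr w p g = 0} = 0 := by
  obtain rfl | hp := eq_or_ne p 0
  exacts [volume_setOf_weightedAutocorr_zero_eq_zero hw,
    volume_setOf_weightedAutocorr_eq_zero_of_ne hw hp]

end WeightedAutocorrelation

theorem inn_Pig (N : ℕ) [NeZero N] (p l : ZMod N) (g : ZMod N → ℂ) :
    inn N g (Pig N p l g) = weightedAutocorr (fun j => gw N (l * j)) p g :=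
  rfl

/-- The set of generators failing `⟨g, Π_λ g⟩ ≠ 0` for some `λ` is a Lebesgue
null set; hence a standard complex Gaussian generator satisfies the condition
almost surely. -/
theorem bad_generators_null (N : ℕ) [NeZero N] :
    MeasureTheory.volume
      {g : ZMod N → ℂ | ∃ μ : ZMod N × ZMod N, inn N g (Pig N μ.1 μ.2 g) = 0} = 0 := by
  simp only [inn_Pig, Set.ofPred_exists]
  exact measure_iUnion_null fun μ =>
    volume_setOf_weightedAutocorr_eq_zero (w := fun j => gw N (μ.2 * j)) (exp_ne_zero _) μ.1
end

section
/- Let g : ZMod N → ℂ be a generator for which there exists a fixed p̂ ∈ ZMod N with p̂ ≠ 0 such that ⟨g, Π_{(p̂,ℓ)} g⟩ = 0 for every ℓ ∈ ZMod N. Then the Gabor system (g_λ)_{λ ∈ (ZMod N)²} does not allow phase retrieval: there exist x, y : ZMod N → ℂ with |⟨x, g_λ⟩| = |⟨y, g_λ⟩| for every λ ∈ (ZMod N)², yet x ≠ c • y for every c ∈ ℂ with |c| = 1. -/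
open Complex Finset

/-!
The ambiguity function `ℓ ↦ ⟨g, Π_{(p̂,ℓ)} g⟩` is the discrete Fourier transform of the
product `conj (g j) * g (j - p̂)`, so its vanishing forces `g j = 0` or `g (j - p̂) = 0` for
every `j`. Hence for every `λ = (p, ℓ)` at least one of the two samples `g_λ 0 = g (-p)` and
`g_λ p̂ = ω^{ℓ p̂} g (p̂ - p)` vanishes, and the signals `δ₀ + δ_p̂` and `δ₀ - δ_p̂`, whose
coefficients are `g_λ 0 ± g_λ p̂`, cannot be told apart by `|⟨·, g_λ⟩|`.
-/

namespace ZMod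

variable {N : ℕ} [NeZero N]

lemma gw_eq_stdAddChar (m : ZMod N) : gw N m = stdAddChar m := by
  rw [stdAddChar_apply, toCircle_apply, gw]

lemma inn_Pig_self_eq_dft (g : ZMod N → ℂ) (p l : ZMod N) :
    inn N g (Pig N p l g) = 𝓕 (fun j => starRingEnd ℂ (g j) * g (j - p)) (-l) := by
  simp only [inn, Pig, Md, Tr, dft_apply, gw_eq_stdAddChar, mul_neg, neg_neg, smul_eq_mul]
  refine sum_congr rfl fun j _ => ?_
  rw [mul_comm l j]
  ring

lemma eq_zero_or_sub_eq_zero_of_inn_Pig_self_eq_zero {g : ZMod N → ℂ} {p : ZMod N}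
    (hg : ∀ l, inn N g (Pig N p l g) = 0) (j : ZMod N) : g j = 0 ∨ g (j - p) = 0 := by
  have hdft : 𝓕 (fun j => starRingEnd ℂ (g j) * g (j - p)) = 0 :=
    funext fun k => by simpa [inn_Pig_self_eq_dft] using hg (-k)
  have hprod := congrFun ((LinearEquiv.map_eq_zero_iff _).mp hdft) j
  simpa using hprod

lemma inn_add_left (x y h : ZMod N → ℂ) : inn N (x + y) h = inn N x h + inn N y h := by
  simp only [inn, Pi.add_apply, map_add, add_mul, sum_add_distrib]

lemma inn_sub_left (x y h : ZMod N → ℂ) : inn N (x - y) h = inn N x h - inn N y h := by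
  simp only [inn, Pi.sub_apply, map_sub, sub_mul, sum_sub_distrib]

lemma inn_single_left (a : ZMod N) (c : ℂ) (h : ZMod N → ℂ) :
    inn N (Pi.single a c) h = starRingEnd ℂ c * h a := by
  simp [inn, Pi.single_apply, apply_ite (starRingEnd ℂ), ite_mul]

end ZMod

lemma norm_add_eq_norm_sub_of_eq_zero_or_eq_zero {E : Type*} [SeminormedAddCommGroup E]
    {a b : E} (h : a = 0 ∨ b = 0) : ‖a + b‖ = ‖a - b‖ := by
  rcases h with rfl | rfl
  · rw [zero_add, zero_sub, norm_neg]
  · rw [add_zero, sub_zero]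

lemma Pi.single_add_single_ne_smul_single_sub_single {ι R : Type*} [DecidableEq ι] [Ring R]
    [CharZero R] {a b : ι} (hab : a ≠ b) (c : R) :
    (Pi.single a 1 + Pi.single b 1 : ι → R) ≠ c • (Pi.single a 1 - Pi.single b 1) := by
  intro h
  have ha := congrFun h a
  have hb := congrFun h b
  simp [hab, hab.symm] at ha hb
  rw [← ha] at hb
  norm_num at hb

open ZMod in
theorem no_phase_retrieval_vanishing_band_general (N : ℕ) [NeZero N]
    (g : ZMod N → ℂ) (phat : ZMod N) (hphat : phat ≠ 0)
    (hg : ∀ l : ZMod N, inn N g (Pig N phat l g) = 0) :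
    ∃ x y : ZMod N → ℂ,
      (∀ p l : ZMod N,
        ‖inn N x (Pig N p l g)‖ = ‖inn N y (Pig N p l g)‖) ∧
      ∀ c : ℂ, ‖c‖ = 1 → x ≠ c • y := by
  refine ⟨Pi.single 0 1 + Pi.single phat 1, Pi.single 0 1 - Pi.single phat 1,
    fun p l => ?_, fun c _ => Pi.single_add_single_ne_smul_single_sub_single hphat.symm c⟩
  simp only [inn_add_left, inn_sub_left, inn_single_left, map_one, one_mul]
  apply norm_add_eq_norm_sub_of_eq_zero_or_eq_zero
  rcases eq_zero_or_sub_eq_zero_of_inn_Pig_self_eq_zero hg (phat - p) with h | h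
  · right
    simp [Pig, Md, Tr, h]
  · left
    rw [sub_sub_cancel_left] at h
    simp [Pig, Md, Tr, h]

/-- If `⟨g, Π_{(p̂,ℓ)} g⟩ = 0` for some fixed `p̂ ≠ 0` and all `ℓ`, then the
Gabor system does not allow phase retrieval. -/
theorem no_phase_retrieval_vanishing_band (N : ℕ) [NeZero N] (hN : 2 ≤ N)
    (g : ZMod N → ℂ) (phat : ZMod N) (hphat : phat ≠ 0)
    (hg : ∀ l : ZMod N, inn N g (Pig N phat l g) = 0) :
    ∃ x y : ZMod N → ℂ,
      (∀ p l : ZMod N,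
        ‖inn N x (Pig N p l g)‖ = ‖inn N y (Pig N p l g)‖) ∧
      ∀ c : ℂ, ‖c‖ = 1 → x ≠ c • y :=
  no_phase_retrieval_vanishing_band_general N g phat hphat hg
end

section
/- Let g : ZMod N → ℂ be a short window: suppose there exist a ∈ ZMod N and a natural number W with 1 ≤ W and 2·W ≤ N such that g(n) = 0 whenever n is not of the form a + (i : ZMod N) for some natural number i < W. Then the Gabor system (g_λ)_{λ ∈ (ZMod N)²} does not allow phase retrieval: there exist x, y : ZMod N → ℂ with |⟨x, g_λ⟩| = |⟨y, g_λ⟩| for every λ ∈ (ZMod N)², yet x ≠ c • y for every c ∈ ℂ with |c| = 1. -/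
open Complex Finset

section InnerProduct

variable {N : ℕ} [NeZero N]

lemma inn_add_left (x y h : ZMod N → ℂ) : inn N (x + y) h = inn N x h + inn N y h := by
  simp only [inn, Pi.add_apply, map_add, add_mul, sum_add_distrib]

lemma inn_sub_left (x y h : ZMod N → ℂ) : inn N (x - y) h = inn N x h - inn N y h := by
  simp only [inn, Pi.sub_apply, map_sub, sub_mul, sum_sub_distrib]

lemma inn_single_one_left (u : ZMod N) (h : ZMod N → ℂ) : inn N (Pi.single u 1) h = h u := by
  simp [inn, Pi.single_apply]

lemma norm_inn_single_add_eq_norm_inn_single_sub {u v : ZMod N} {h : ZMod N → ℂ}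
    (huv : h u = 0 ∨ h v = 0) :
    ‖inn N (Pi.single u 1 + Pi.single v 1) h‖ = ‖inn N (Pi.single u 1 - Pi.single v 1) h‖ := by
  rw [inn_add_left, inn_sub_left, inn_single_one_left, inn_single_one_left]
  rcases huv with hu | hv
  · rw [hu, zero_add, zero_sub, norm_neg]
  · rw [hv, add_zero, sub_zero]

end InnerProduct

lemma single_add_single_ne_smul_single_sub_single {N : ℕ} {u v : ZMod N} (huv : u ≠ v) (c : ℂ) :
    (Pi.single u 1 + Pi.single v 1 : ZMod N → ℂ) ≠ c • (Pi.single u 1 - Pi.single v 1) := by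
  intro h
  have hu := congrFun h u
  have hv := congrFun h v
  simp only [Pi.add_apply, Pi.sub_apply, Pi.smul_apply, Pi.single_eq_same,
    Pi.single_eq_of_ne huv, Pi.single_eq_of_ne huv.symm, smul_eq_mul, add_zero, zero_add,
    sub_zero, zero_sub, mul_one, mul_neg] at hu hv
  have h2 : (2 : ℂ) = 0 := by linear_combination hu + hv
  norm_num at h2

def window {N : ℕ} (a : ZMod N) (W : ℕ) : Set (ZMod N) :=
  {n | ∃ i : ℕ, i < W ∧ n = a + (i : ZMod N)}

lemma add_natCast_notMem_window {N W : ℕ} (hW : 2 * W ≤ N) {a n : ZMod N}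
    (hn : n ∈ window a W) : n + W ∉ window a W := by
  rintro ⟨j, hj, hnj⟩
  obtain ⟨i, hi, rfl⟩ := hn
  have hcast : ((W + i : ℕ) : ZMod N) = j := by
    push_cast
    linear_combination hnj
  rw [ZMod.natCast_eq_natCast_iff', Nat.mod_eq_of_lt (by omega), Nat.mod_eq_of_lt (by omega)]
    at hcast
  omega

lemma natCast_ne_zero_of_pos_of_lt {N W : ℕ} (hW0 : 0 < W) (hWN : W < N) : (W : ZMod N) ≠ 0 := by
  rw [Ne, ZMod.natCast_eq_zero_iff]
  exact fun hdvd => (Nat.le_of_dvd hW0 hdvd).not_gt hWN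

lemma Pig_apply (N : ℕ) (p l : ZMod N) (g : ZMod N → ℂ) (n : ZMod N) :
    Pig N p l g n = gw N (l * n) * g (n - p) :=
  rfl

lemma Pig_apply_zero_eq_zero_or_apply_natCast_eq_zero {N W : ℕ} (hW : 2 * W ≤ N)
    {g : ZMod N → ℂ} {a : ZMod N} (hsupp : ∀ n, n ∉ window a W → g n = 0) (p l : ZMod N) :
    Pig N p l g 0 = 0 ∨ Pig N p l g W = 0 := by
  simp only [Pig_apply, mul_eq_zero]
  by_cases hp : 0 - p ∈ window a W
  · right; right
    exact hsupp _ (by simpa [sub_eq_neg_add] using add_natCast_notMem_window hW hp)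
  · left; right
    exact hsupp _ hp

theorem no_phase_retrieval_short_window_general (N : ℕ) [NeZero N]
    (g : ZMod N → ℂ) (a : ZMod N) (W : ℕ) (hW1 : 1 ≤ W) (hW2 : 2 * W ≤ N)
    (hsupp : ∀ n : ZMod N, (¬ ∃ i : ℕ, i < W ∧ n = a + (i : ZMod N)) → g n = 0) :
    ∃ x y : ZMod N → ℂ,
      (∀ p l : ZMod N,
        ‖inn N x (Pig N p l g)‖ = ‖inn N y (Pig N p l g)‖) ∧
      ∀ c : ℂ, ‖c‖ = 1 → x ≠ c • y := by
  have hW0 : (0 : ZMod N) ≠ W := (natCast_ne_zero_of_pos_of_lt hW1 (by omega)).symm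
  refine ⟨Pi.single 0 1 + Pi.single (W : ZMod N) 1, Pi.single 0 1 - Pi.single (W : ZMod N) 1,
    fun p l => ?_, fun c _ => single_add_single_ne_smul_single_sub_single hW0 c⟩
  exact norm_inn_single_add_eq_norm_inn_single_sub
    (Pig_apply_zero_eq_zero_or_apply_natCast_eq_zero hW2 hsupp p l)

/-- A short window (support contained in a window of length `W` with `2W ≤ N`)
does not generate a Gabor system allowing phase retrieval. -/
theorem no_phase_retrieval_short_window (N : ℕ) [NeZero N] (hN : 2 ≤ N)
    (g : ZMod N → ℂ) (a : ZMod N) (W : ℕ) (hW1 : 1 ≤ W) (hW2 : 2 * W ≤ N)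
    (hsupp : ∀ n : ZMod N, (¬ ∃ i : ℕ, i < W ∧ n = a + (i : ZMod N)) → g n = 0) :
    ∃ x y : ZMod N → ℂ,
      (∀ p l : ZMod N,
        ‖inn N x (Pig N p l g)‖ = ‖inn N y (Pig N p l g)‖) ∧
      ∀ c : ℂ, ‖c‖ = 1 → x ≠ c • y :=
  no_phase_retrieval_short_window_general N g a W hW1 hW2 hsupp
end

section
/- Let N ≥ 2 and let g : ZMod N → ℂ be the Alltop sequence, g(n) = (1/√N)·ω^{n³}, where n³ is computed in ZMod N. Then the Gabor system (g_λ)_{λ ∈ (ZMod N)²} does not allow phase retrieval: ⟨g, Π_{(0,ℓ)} g⟩ = 0 for every ℓ ≠ 0, and there exist x, y : ZMod N → ℂ with |⟨x, g_λ⟩| = |⟨y, g_λ⟩| for every λ ∈ (ZMod N)², yet x ≠ c • y for every c ∈ ℂ with |c| = 1. -/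
open Complex Finset

/-! Any window `g` of constant modulus `s` defeats phase retrieval: the coefficients
of the point mass `δ_a` are `⟨δ_a, Π_{(p,ℓ)} g⟩ = ω^{ℓa} g(a - p)`, of modulus `s` whatever `a`
is, so `δ_0` and `δ_1` have the same Gabor magnitudes without being multiples of
each other. The Alltop window has constant modulus `1/√N`, and for such a window
`⟨g, Π_{(0,ℓ)} g⟩ = s² ∑ⱼ ω^{ℓj}`, a character sum that vanishes for `ℓ ≠ 0`. -/

namespace GaborSystem

variable {N : ℕ} [NeZero N]

theorem gw_eq_stdAddChar (m : ZMod N) : gw N m = ZMod.stdAddChar m := by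
  rw [ZMod.stdAddChar_apply, ZMod.toCircle_apply, gw]

theorem norm_gw (m : ZMod N) : ‖gw N m‖ = 1 := by
  rw [gw_eq_stdAddChar, ZMod.stdAddChar_apply, Circle.norm_coe]

theorem sum_gw_mul_eq_zero {l : ZMod N} (hl : l ≠ 0) :
    ∑ j : ZMod N, gw N (l * j) = 0 := by
  classical
  simpa [gw_eq_stdAddChar, mul_comm l, hl] using
    AddChar.sum_mulShift l (ZMod.isPrimitive_stdAddChar N)

theorem inn_single_one (a : ZMod N) (y : ZMod N → ℂ) :
    inn N (Pi.single a 1) y = y a := by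
  classical
  simp [inn, Pi.single_apply]

theorem norm_inn_single_Pig (a p l : ZMod N) (g : ZMod N → ℂ) :
    ‖inn N (Pi.single a 1) (Pig N p l g)‖ = ‖g (a - p)‖ := by
  rw [inn_single_one, Pig, Md, Tr, norm_mul, norm_gw, one_mul]

theorem inn_Pig_zero_of_norm_eq {g : ZMod N → ℂ} {s : ℝ}
    (hg : ∀ n, ‖g n‖ = s) (l : ZMod N) :
    inn N g (Pig N 0 l g) = (s : ℂ) ^ 2 * ∑ j : ZMod N, gw N (l * j) := by
  rw [inn, mul_sum]
  refine sum_congr rfl fun j _ => ?_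
  have hconj : (starRingEnd ℂ) (g j) * g j = (s : ℂ) ^ 2 := by
    rw [mul_comm, mul_conj, ← ofReal_pow, normSq_eq_norm_sq, hg]
  simp only [Pig, Md, Tr, sub_zero]
  linear_combination gw N (l * j) * hconj

theorem exists_not_phase_retrievable_of_norm_eq [Nontrivial (ZMod N)]
    {g : ZMod N → ℂ} {s : ℝ} (hg : ∀ n, ‖g n‖ = s) :
    ∃ x y : ZMod N → ℂ,
      (∀ p l : ZMod N, ‖inn N x (Pig N p l g)‖ = ‖inn N y (Pig N p l g)‖) ∧
      ∀ c : ℂ, x ≠ c • y := by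
  refine ⟨Pi.single 0 1, Pi.single 1 1, fun p l => ?_, fun c h => ?_⟩
  · rw [norm_inn_single_Pig, norm_inn_single_Pig, hg, hg]
  · simpa using congrFun h 0

end GaborSystem

open GaborSystem in
/-- The Alltop sequence `g(n) = N^{-1/2} ω^{n³}` satisfies
`⟨g, Π_{(0,ℓ)} g⟩ = 0` for all `ℓ ≠ 0`, and its Gabor system does not allow
phase retrieval. -/
theorem no_phase_retrieval_Alltop (N : ℕ) [NeZero N] (hN : 2 ≤ N)
    (g : ZMod N → ℂ) (hgdef : ∀ n : ZMod N, g n = (1 / Real.sqrt N : ℂ) * gw N (n ^ 3)) :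
    (∀ l : ZMod N, l ≠ 0 → inn N g (Pig N 0 l g) = 0) ∧
    ∃ x y : ZMod N → ℂ,
      (∀ p l : ZMod N,
        ‖inn N x (Pig N p l g)‖ = ‖inn N y (Pig N p l g)‖) ∧
      ∀ c : ℂ, ‖c‖ = 1 → x ≠ c • y := by
  have : Fact (1 < N) := ⟨hN⟩
  have hg : ∀ n, ‖g n‖ = ‖(1 / Real.sqrt N : ℂ)‖ := fun n => by
    rw [hgdef, norm_mul, norm_gw, mul_one]
  obtain ⟨x, y, hxy, hne⟩ := exists_not_phase_retrievable_of_norm_eq hg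
  refine ⟨fun l hl => ?_, x, y, hxy, fun c _ => hne c⟩
  rw [inn_Pig_zero_of_norm_eq hg, sum_gw_mul_eq_zero hl, mul_zero]
end

section
/- Let f_1,…,f_m ∈ ℂ^N be measurement vectors, D an N×d complex matrix with columns d_1,…,d_d, and k a natural number with 2k ≤ d. Suppose that for every subset 𝒦 ⊆ Fin d with |𝒦| = 2k there is no nonzero Hermitian N×N matrix H with rank H ≤ 2, column space of H contained in W_𝒦 = span{d_i : i ∈ 𝒦}, and ⟨f_i, H f_i⟩ = 0 for all i = 1,…,m. Then (f_i)_{i=1}^m allows kD-phase retrieval: for all x, y ∈ C_{k,D}, if |⟨f_i, x⟩| = |⟨f_i, y⟩| for all i, then there exists c ∈ ℂ with |c| = 1 and x = c • y. -/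
open Complex Finset Matrix

/-- Inner product on `ℂ^N`, conjugate linear in the first argument. -/
noncomputable def innF (N : ℕ) (x y : Fin N → ℂ) : ℂ :=
  ∑ j : Fin N, (starRingEnd ℂ) (x j) * y j

/-- The class of signals `k`-sparse in the dictionary `D`. -/
def sparseInDict (N d k : ℕ) (D : Matrix (Fin N) (Fin d) ℂ) (x : Fin N → ℂ) : Prop :=
  ∃ z : Fin d → ℂ, Set.ncard {i | z i ≠ 0} ≤ k ∧ x = D.mulVec z

/-- The span of the dictionary columns indexed by `𝒦`. -/
noncomputable def dictSpan (N d : ℕ) (D : Matrix (Fin N) (Fin d) ℂ) (𝒦 : Finset (Fin d)) :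
    Submodule ℂ (Fin N → ℂ) :=
  Submodule.span ℂ {v | ∃ i ∈ 𝒦, v = Dᵀ i}

/-! If `|⟨f_i, x⟩| = |⟨f_i, y⟩|` for all `i`, the matrix `H = x xᴴ - y yᴴ` is Hermitian, has
rank at most 2 and satisfies `⟨f_i, H f_i⟩ = 0`; its range lies in `span {x, y} ⊆ W_𝒦` for any
`𝒦` of size `2k` containing the supports of `x` and `y`. The hypothesis therefore forces `H = 0`,
and `x xᴴ = y yᴴ` determines `x` up to a unimodular scalar multiple of `y`. -/

namespace Matrix

theorem isHermitian_vecMulVec_star_sub {ι R : Type*} [CommRing R] [StarRing R] (x y : ι → R) :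
    (vecMulVec x (star x) - vecMulVec y (star y)).IsHermitian :=
  IsHermitian.ext fun i j => by simp [vecMulVec_apply, mul_comm]

variable {ι 𝕜 : Type*} [RCLike 𝕜]

theorem exists_norm_eq_one_and_eq_smul_of_vecMulVec_star_eq {x y : ι → 𝕜}
    (h : vecMulVec x (star x) = vecMulVec y (star y)) : ∃ c : 𝕜, ‖c‖ = 1 ∧ x = c • y := by
  have hentry : ∀ i j, x i * star (x j) = y i * star (y j) := fun i j => congrFun₂ h i j
  have hnorm : ∀ j, ‖x j‖ = ‖y j‖ := fun j => by
    have hjj := hentry j j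
    rw [RCLike.star_def, RCLike.mul_conj, RCLike.mul_conj] at hjj
    exact (sq_eq_sq₀ (norm_nonneg _) (norm_nonneg _)).mp (by exact_mod_cast hjj)
  by_cases hy : y = 0
  · refine ⟨1, norm_one, funext fun i => ?_⟩
    simpa [hy] using hnorm i
  obtain ⟨j, hj⟩ := Function.ne_iff.mp hy
  have hxj : x j ≠ 0 := norm_ne_zero_iff.mp (hnorm j ▸ norm_ne_zero_iff.mpr hj)
  refine ⟨star (y j) / star (x j), ?_, funext fun i => ?_⟩
  · rw [norm_div, norm_star, norm_star, hnorm, div_self (norm_ne_zero_iff.mpr hj)]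
  · rw [Pi.smul_apply, smul_eq_mul, div_mul_eq_mul_div, eq_div_iff (star_ne_zero.mpr hxj),
      hentry i j, mul_comm]

section Fintype

variable [Fintype ι]

theorem vecMulVec_star_mulVec (x v : ι → 𝕜) :
    vecMulVec x (star x) *ᵥ v = (star x ⬝ᵥ v) • x := by
  rw [vecMulVec_mulVec, op_smul_eq_smul]

theorem star_dotProduct_vecMulVec_star_mulVec (x f : ι → 𝕜) :
    star f ⬝ᵥ (vecMulVec x (star x) *ᵥ f) = (‖star f ⬝ᵥ x‖ : 𝕜) ^ 2 := by
  rw [vecMulVec_star_mulVec, dotProduct_smul, smul_eq_mul, star_dotProduct]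
  exact RCLike.conj_mul _

theorem range_vecMulVec_star_sub_le_span_pair (x y : ι → 𝕜) :
    LinearMap.range (vecMulVec x (star x) - vecMulVec y (star y)).mulVecLin ≤
      Submodule.span 𝕜 {x, y} := by
  rintro _ ⟨v, rfl⟩
  rw [mulVecLin_apply, sub_mulVec, vecMulVec_star_mulVec, vecMulVec_star_mulVec]
  exact sub_mem (Submodule.smul_mem _ _ (Submodule.subset_span (Set.mem_insert _ _)))
    (Submodule.smul_mem _ _ (Submodule.subset_span (Set.mem_insert_of_mem _ rfl)))

theorem rank_vecMulVec_star_sub_le_two (x y : ι → 𝕜) :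
    (vecMulVec x (star x) - vecMulVec y (star y)).rank ≤ 2 := by
  classical
  have hpair := finrank_span_finset_le_card (R := 𝕜) ({x, y} : Finset (ι → 𝕜))
  rw [Finset.coe_pair] at hpair
  exact (Submodule.finrank_mono (range_vecMulVec_star_sub_le_span_pair x y)).trans
    (hpair.trans Finset.card_le_two)

end Fintype

end Matrix

theorem innF_eq_star_dotProduct (N : ℕ) (x y : Fin N → ℂ) : innF N x y = star x ⬝ᵥ y := rfl

section Dictionary

variable {N d : ℕ} {D : Matrix (Fin N) (Fin d) ℂ}

theorem dictSpan_mono {𝒦 𝒦' : Finset (Fin d)} (h : 𝒦 ⊆ 𝒦') :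
    dictSpan N d D 𝒦 ≤ dictSpan N d D 𝒦' :=
  Submodule.span_mono fun _ ⟨i, hi, hv⟩ => ⟨i, h hi, hv⟩

theorem mulVec_mem_dictSpan {z : Fin d → ℂ} {𝒦 : Finset (Fin d)}
    (hz : Function.support z ⊆ 𝒦) : D *ᵥ z ∈ dictSpan N d D 𝒦 := by
  rw [mulVec_eq_sum]
  refine Submodule.sum_mem _ fun i _ => ?_
  by_cases hzi : z i = 0
  · simp [hzi]
  · rw [op_smul_eq_smul]
    exact Submodule.smul_mem _ _ (Submodule.subset_span ⟨i, hz hzi, rfl⟩)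

theorem sparseInDict.exists_mem_dictSpan {k : ℕ} {x : Fin N → ℂ} (hx : sparseInDict N d k D x) :
    ∃ s : Finset (Fin d), s.card ≤ k ∧ x ∈ dictSpan N d D s := by
  obtain ⟨z, hz, rfl⟩ := hx
  have hfin : (Function.support z).Finite := Set.toFinite _
  exact ⟨hfin.toFinset, (Set.ncard_eq_toFinset_card _ hfin).symm.trans_le hz,
    mulVec_mem_dictSpan hfin.coe_toFinset.superset⟩

theorem exists_card_eq_two_mul_mem_dictSpan {k : ℕ} (hk : 2 * k ≤ d) {x y : Fin N → ℂ}
    (hx : sparseInDict N d k D x) (hy : sparseInDict N d k D y) :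
    ∃ 𝒦 : Finset (Fin d), 𝒦.card = 2 * k ∧ x ∈ dictSpan N d D 𝒦 ∧ y ∈ dictSpan N d D 𝒦 := by
  classical
  obtain ⟨s, hs, hxs⟩ := hx.exists_mem_dictSpan
  obtain ⟨t, ht, hyt⟩ := hy.exists_mem_dictSpan
  obtain ⟨𝒦, hst, h𝒦⟩ := Finset.exists_superset_card_eq (n := 2 * k)
    ((Finset.card_union_le s t).trans (by omega)) (by simpa using hk)
  exact ⟨𝒦, h𝒦, dictSpan_mono (Finset.union_subset_left hst) hxs,
    dictSpan_mono (Finset.union_subset_right hst) hyt⟩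

end Dictionary

/-- Sufficiency part of the sparse PhaseLift injectivity condition: if for
every `𝒦` with `|𝒦| = 2k` the kernel of the PhaseLift operator contains no
nonzero Hermitian matrix of rank at most 2 with range in `W_𝒦`, then the
measurements allow `kD`-phase retrieval. -/
theorem sparse_PhaseLift_sufficient (N d m k : ℕ) (hk : 2 * k ≤ d)
    (f : Fin m → (Fin N → ℂ)) (D : Matrix (Fin N) (Fin d) ℂ)
    (h : ∀ 𝒦 : Finset (Fin d), 𝒦.card = 2 * k →
      ¬ ∃ H : Matrix (Fin N) (Fin N) ℂ, H.IsHermitian ∧ H ≠ 0 ∧ H.rank ≤ 2 ∧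
          LinearMap.range H.mulVecLin ≤ dictSpan N d D 𝒦 ∧
          ∀ i : Fin m, innF N (f i) (H.mulVec (f i)) = 0) :
    ∀ x y : Fin N → ℂ, sparseInDict N d k D x → sparseInDict N d k D y →
      (∀ i : Fin m, ‖innF N (f i) x‖ = ‖innF N (f i) y‖) →
      ∃ c : ℂ, ‖c‖ = 1 ∧ x = c • y := by
  intro x y hx hy habs
  obtain ⟨𝒦, h𝒦, hx𝒦, hy𝒦⟩ := exists_card_eq_two_mul_mem_dictSpan hk hx hy
  refine exists_norm_eq_one_and_eq_smul_of_vecMulVec_star_eq (sub_eq_zero.mp ?_)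
  by_contra hH
  refine h 𝒦 h𝒦 ⟨_, isHermitian_vecMulVec_star_sub x y, hH, rank_vecMulVec_star_sub_le_two x y,
    (range_vecMulVec_star_sub_le_span_pair x y).trans
      (Submodule.span_le.mpr (Set.pair_subset hx𝒦 hy𝒦)), fun i => ?_⟩
  rw [innF_eq_star_dotProduct, sub_mulVec, dotProduct_sub, star_dotProduct_vecMulVec_star_mulVec,
    star_dotProduct_vecMulVec_star_mulVec, ← innF_eq_star_dotProduct, ← innF_eq_star_dotProduct,
    habs i, sub_self]
end
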